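/- Let X be a set, k ≥ 3, and E ⊆ X^k a k-ary relation. For 3 ≤ j ≤ k, e ∈ X^{k−j}, and b ∈ X, let S^e_b = {(t₁,…,t_{j−1}) ∈ X^{j−1} : (t₁,…,t_{j−1},b,e) ∈ E}. Assume: (a) there are constants C₃, C₄ ≥ 1 such that for all 3 ≤ j ≤ k, all e ∈ X^{k−j}, and all finite D ⊆ X^{j−1}, the number of distinct sets D ∩ S^e_b with b ∈ X is at most C₃·|D|^{C₄}; and (b) there are c ≥ 1 and n₀ ∈ ℕ such that for all n ≥ n₀ and all e ∈ X^{k−2}, every sequence in X of length at least n^c contains a subsequence of length n that is indiscernible with respect to the binary relation {(x,y) ∈ X² : (x,y,e) ∈ E}. Then there exist c' > 0 and n₁ ∈ ℕ such that for all n ≥ n₁, every sequence in X of length at least twr_{k−1}(n^{c'}) contains an E-indiscernible subsequence of length n. (This is the combinatorial content of the paper's tower-bound theorem for k-ary relations in NIP structures.) -/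

import Mathlib

open scoped Classical

/-- A finite sequence `a` is `E`-indiscernible for a `k`-ary relation `E` if `E` holds on all
increasing `k`-tuples from the sequence, or fails on all of them. -/
def IsIndiscernible {X : Type*} {k m : ℕ} (E : (Fin k → X) → Prop) (a : Fin m → X) : Prop :=
  (∀ s : Fin k → Fin m, StrictMono s → E (a ∘ s)) ∨
  (∀ s : Fin k → Fin m, StrictMono s → ¬ E (a ∘ s))

/-- The tower function: `Twr 0 x = x` and `Twr (i+1) x = 2^(Twr i x)`; so `Twr i` is the
paper's `twr_{i+1}` (with `twr₁(x) = x`). -/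
noncomputable def Twr : ℕ → ℝ → ℝ
  | 0, x => x
  | i + 1, x => (2 : ℝ) ^ (Twr i x)

/-!
Erdős–Rado stepping up. In a sequence of length `(2 ^ (M + 1) ^ r + 1) ^ (M + 1)` a greedy
pigeonhole construction finds an end-homogeneous subsequence of length `M + 1`: the truth value of
`F` on an increasing `(r + 1)`-tuple does not depend on its last entry. With `b` the last term,
an indiscernible subsequence of length `n` for the `r`-ary fiber `F (·, b)` among the first `M`
terms is then `F`-indiscernible. Starting from the polynomial bound for the binary fibers and
moving the parameters into the tuple one at a time, each step costs one exponential, which the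
tower absorbs by raising its argument to a constant power.
-/

lemma two_le_twr (i : ℕ) {x : ℝ} (hx : 2 ≤ x) : 2 ≤ Twr i x := by
  induction i with
  | zero => exact hx
  | succ i ih =>
    calc (2 : ℝ) = 2 ^ (1 : ℝ) := (Real.rpow_one 2).symm
      _ ≤ 2 ^ Twr i x := Real.rpow_le_rpow_of_exponent_le one_le_two (by linarith)

lemma natCast_mul_le_pow (p : ℕ) {y : ℝ} (hy : 2 ≤ y) : (p : ℝ) * y ≤ y ^ p := by
  cases p with
  | zero => simp
  | succ p =>
    have hp : ((p + 1 : ℕ) : ℝ) ≤ y ^ p :=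
      calc ((p + 1 : ℕ) : ℝ) ≤ 2 ^ p := by exact_mod_cast Nat.lt_two_pow_self
        _ ≤ y ^ p := pow_le_pow_left₀ zero_le_two hy p
    rw [pow_succ]
    exact mul_le_mul_of_nonneg_right hp (by linarith)

lemma natCast_mul_twr_le (i p : ℕ) {x : ℝ} (hx : 2 ≤ x) : (p : ℝ) * Twr i x ≤ Twr i (x ^ p) := by
  induction i with
  | zero => exact natCast_mul_le_pow p hx
  | succ i ih =>
    have h2T : 2 ≤ (2 : ℝ) ^ Twr i x := two_le_twr (i + 1) hx
    calc (p : ℝ) * 2 ^ Twr i x ≤ (2 ^ Twr i x) ^ p := natCast_mul_le_pow p h2T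
      _ = 2 ^ (p * Twr i x) := by
        rw [← Real.rpow_natCast, ← Real.rpow_mul zero_le_two, mul_comm]
      _ ≤ 2 ^ Twr i (x ^ p) := Real.rpow_le_rpow_of_exponent_le one_le_two ih

lemma twr_pow_le (i p : ℕ) {x : ℝ} (hx : 2 ≤ x) : Twr i x ^ p ≤ Twr i (x ^ p) := by
  cases i with
  | zero => exact le_rfl
  | succ i =>
    calc ((2 : ℝ) ^ Twr i x) ^ p = 2 ^ (p * Twr i x) := by
          rw [← Real.rpow_natCast, ← Real.rpow_mul zero_le_two, mul_comm]
      _ ≤ 2 ^ Twr i (x ^ p) :=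
          Real.rpow_le_rpow_of_exponent_le one_le_two (natCast_mul_twr_le i p hx)

lemma two_pow_add_one_pow_le (r : ℕ) {m : ℕ} (hm : 2 ≤ m) :
    (2 ^ m ^ r + 1) ^ m ≤ 2 ^ m ^ (r + 2) := by
  have hexp : (m ^ r + 1) * m ≤ m ^ (r + 2) := by
    have hle : m ≤ m ^ (r + 1) := Nat.le_self_pow (by omega) m
    have : (m ^ r + 1) * m = m ^ (r + 1) + m := by ring
    rw [this, pow_succ m (r + 1)]
    nlinarith
  calc (2 ^ m ^ r + 1) ^ m ≤ (2 ^ (m ^ r + 1)) ^ m := by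
        gcongr
        rw [pow_succ]
        have := Nat.one_le_two_pow (n := m ^ r)
        omega
    _ = 2 ^ ((m ^ r + 1) * m) := (pow_mul 2 _ _).symm
    _ ≤ 2 ^ m ^ (r + 2) := Nat.pow_le_pow_right zero_lt_two hexp

lemma erdosRado_bound_le_twr_succ (i r : ℕ) {x : ℝ} (hx : 2 ≤ x) :
    (((2 ^ (⌈Twr i x⌉₊ + 1) ^ r + 1) ^ (⌈Twr i x⌉₊ + 1) : ℕ) : ℝ) ≤
      Twr (i + 1) (x ^ (2 * r + 4)) := by
  set T := Twr i x
  set m := ⌈T⌉₊ + 1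
  have hT : 2 ≤ T := two_le_twr i hx
  have hmT : (m : ℝ) ≤ T ^ 2 := by
    have : (⌈T⌉₊ : ℝ) < T + 1 := Nat.ceil_lt_add_one (by linarith)
    push_cast [m]
    nlinarith
  have hm : 2 ≤ m := Nat.succ_le_succ (Nat.one_le_ceil_iff.mpr (by linarith))
  calc (((2 ^ m ^ r + 1) ^ m : ℕ) : ℝ) ≤ ((2 ^ m ^ (r + 2) : ℕ) : ℝ) := by
        exact_mod_cast two_pow_add_one_pow_le r hm
    _ = 2 ^ (((m ^ (r + 2) : ℕ) : ℝ)) := by rw [Real.rpow_natCast]; push_cast; rfl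
    _ ≤ 2 ^ Twr i (x ^ (2 * r + 4)) := by
        apply Real.rpow_le_rpow_of_exponent_le one_le_two
        calc (((m ^ (r + 2) : ℕ) : ℝ)) = (m : ℝ) ^ (r + 2) := by push_cast; rfl
          _ ≤ (T ^ 2) ^ (r + 2) := pow_le_pow_left₀ (by positivity) hmT _
          _ = T ^ (2 * r + 4) := by rw [← pow_mul]; ring_nf
          _ ≤ Twr i (x ^ (2 * r + 4)) := twr_pow_le i _ hx

section EndHomogeneous

variable {X : Type*} {r N : ℕ} (F : (Fin (r + 1) → X) → Prop) (a : Fin N → X)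

def IsEndHomogeneousOn (A B : Finset (Fin N)) : Prop :=
  ∀ y : Fin r → Fin N, (∀ i, y i ∈ A) → ∀ b ∈ B, ∀ b' ∈ B, (∀ i, y i < b) → (∀ i, y i < b') →
    (F (Fin.snoc (a ∘ y) (a b)) ↔ F (Fin.snoc (a ∘ y) (a b')))

variable {F a}

lemma IsEndHomogeneousOn.mono {A A' B B' : Finset (Fin N)} (h : IsEndHomogeneousOn F a A B)
    (hA : A' ⊆ A) (hB : B' ⊆ B) : IsEndHomogeneousOn F a A' B' :=
  fun y hy b hb b' hb' => h y (fun i => hA (hy i)) b (hB hb) b' (hB hb')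

variable (F a)

lemma exists_insert_isEndHomogeneousOn (m : ℕ) {A S : Finset (Fin N)} (hm : A.card < m)
    (hAS : ∀ x ∈ A, ∀ z ∈ S, x < z) (hA : IsEndHomogeneousOn F a A (A ∪ S)) {n : ℕ}
    (hS : 2 ^ m ^ r * n < S.card) :
    ∃ b ∉ A, ∃ S' : Finset (Fin N), n ≤ S'.card ∧ (∀ x ∈ insert b A, ∀ z ∈ S', x < z) ∧
      IsEndHomogeneousOn F a (insert b A) (insert b A ∪ S') := by
  have hSne : S.Nonempty := Finset.card_pos.1 (Nat.zero_lt_of_lt hS)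
  set b := S.min' hSne
  have hbS : b ∈ S := S.min'_mem hSne
  have hbA : b ∉ A := fun h => lt_irrefl b (hAS b h b hbS)
  set A' := insert b A
  set type : Fin N → Finset (Fin r → Fin N) := fun z =>
    (Fintype.piFinset fun _ : Fin r => A').filter fun y => F (Fin.snoc (a ∘ y) (a z))
  have htypes : (Fintype.piFinset fun _ : Fin r => A').powerset.card * n ≤ (S.erase b).card := by
    have hA' : A'.card ≤ m := by rw [Finset.card_insert_of_notMem hbA]; omega
    have hK : (Fintype.piFinset fun _ : Fin r => A').powerset.card ≤ 2 ^ m ^ r := by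
      rw [Finset.card_powerset, Fintype.card_piFinset_const]
      exact Nat.pow_le_pow_right zero_lt_two (Nat.pow_le_pow_left hA' r)
    rw [Finset.card_erase_of_mem hbS]
    exact (Nat.mul_le_mul_right _ hK).trans (Nat.le_sub_one_of_lt hS)
  obtain ⟨τ, -, hτ⟩ := Finset.exists_le_card_fiber_of_mul_le_card_of_maps_to
    (f := type) (fun z _ => Finset.mem_powerset.2 (Finset.filter_subset _ _))
    (Finset.powerset_nonempty _) htypes
  set S' := (S.erase b).filter fun z => type z = τ
  have hS'S : S' ⊆ S := (Finset.filter_subset _ _).trans (Finset.erase_subset _ _)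
  have hbS' : ∀ z ∈ S', b < z := fun z hz =>
    lt_of_le_of_ne (S.min'_le z (hS'S hz)) (Finset.ne_of_mem_erase (Finset.mem_filter.1 hz).1).symm
  have hmemS' : ∀ z ∈ A' ∪ S', b < z → z ∈ S' := by
    intro z hz hbz
    rcases Finset.mem_union.1 hz with hz | hz
    · rcases Finset.mem_insert.1 hz with rfl | hz
      · exact absurd hbz (lt_irrefl _)
      · exact absurd (hAS z hz b hbS) hbz.not_gt
    · exact hz
  refine ⟨b, hbA, S', hτ, fun x hx z hz => ?_, fun y hy b₁ hb₁ b₂ hb₂ hy₁ hy₂ => ?_⟩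
  · rcases Finset.mem_insert.1 hx with rfl | hx
    · exact hbS' z hz
    · exact hAS x hx z (hS'S hz)
  by_cases hyA : ∀ i, y i ∈ A
  · have hsub : A' ∪ S' ⊆ A ∪ S := Finset.union_subset
      (Finset.insert_subset (Finset.mem_union_right _ hbS) Finset.subset_union_left)
      (hS'S.trans Finset.subset_union_right)
    exact hA y hyA b₁ (hsub hb₁) b₂ (hsub hb₂) hy₁ hy₂
  · -- `y` involves the new point `b`, so `b₁, b₂` lie in `S'`, where the type over `A'` is
    -- constant.
    push Not at hyA
    obtain ⟨i, hi⟩ := hyA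
    have hyi : y i = b := (Finset.mem_insert.1 (hy i)).resolve_right hi
    have h₁ := (Finset.mem_filter.1 (hmemS' b₁ hb₁ (hyi ▸ hy₁ i))).2
    have h₂ := (Finset.mem_filter.1 (hmemS' b₂ hb₂ (hyi ▸ hy₂ i))).2
    have hyA' : y ∈ Fintype.piFinset fun _ : Fin r => A' := Fintype.mem_piFinset.2 hy
    simpa [type, hyA'] using congrArg (y ∈ ·) (h₁.trans h₂.symm)

lemma exists_isEndHomogeneousOn_of_card_le (m d : ℕ) {A S : Finset (Fin N)}
    (hm : A.card + d ≤ m) (hAS : ∀ x ∈ A, ∀ z ∈ S, x < z)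
    (hA : IsEndHomogeneousOn F a A (A ∪ S)) (hS : (2 ^ m ^ r + 1) ^ d ≤ S.card) :
    ∃ B : Finset (Fin N), B.card = A.card + d ∧ IsEndHomogeneousOn F a B B := by
  induction d generalizing A S with
  | zero => exact ⟨A, rfl, hA.mono subset_rfl Finset.subset_union_left⟩
  | succ d ih =>
    have hS' : 2 ^ m ^ r * (2 ^ m ^ r + 1) ^ d < S.card :=
      calc _ < 2 ^ m ^ r * (2 ^ m ^ r + 1) ^ d + (2 ^ m ^ r + 1) ^ d :=
            Nat.lt_add_of_pos_right (by positivity)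
        _ = (2 ^ m ^ r + 1) ^ (d + 1) := by ring
        _ ≤ S.card := hS
    obtain ⟨b, hbA, S', hS'card, hAS', hA'⟩ :=
      exists_insert_isEndHomogeneousOn F a m (by omega) hAS hA hS'
    obtain ⟨B, hB, hBhom⟩ := ih (by rw [Finset.card_insert_of_notMem hbA]; omega) hAS' hA' hS'card
    exact ⟨B, by rw [hB, Finset.card_insert_of_notMem hbA]; ring, hBhom⟩

theorem exists_strictMono_endHomogeneous (hr : r ≠ 0) {m : ℕ}
    (hN : (2 ^ (m + 1) ^ r + 1) ^ (m + 1) ≤ N) :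
    ∃ s : Fin (m + 1) → Fin N, StrictMono s ∧ ∀ u : Fin (r + 1) → Fin (m + 1), StrictMono u →
      (F (a ∘ s ∘ u) ↔ F (Fin.snoc (a ∘ s ∘ Fin.init u) (a (s (Fin.last m))))) := by
  obtain ⟨B, hB, hBhom⟩ := exists_isEndHomogeneousOn_of_card_le F a (m + 1) (m + 1)
    (A := ∅) (S := Finset.univ) (by simp) (by simp)
    (fun y hy => absurd (hy ⟨0, Nat.pos_of_ne_zero hr⟩) (Finset.notMem_empty _))
    (by simpa using hN)
  rw [Finset.card_empty, zero_add] at hB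
  set s := B.orderEmbOfFin hB
  refine ⟨s, s.strictMono, fun u hu => ?_⟩
  have hinit : ∀ i, (s ∘ Fin.init u) i < s (u (Fin.last r)) :=
    fun i => s.strictMono (hu (Fin.castSucc_lt_last i))
  have hlast : ∀ i, (s ∘ Fin.init u) i < s (Fin.last m) :=
    fun i => s.strictMono ((hu (Fin.castSucc_lt_last i)).trans_le (Fin.le_last _))
  rw [← Fin.snoc_init_self (a ∘ s ∘ u)]
  exact hBhom _ (fun i => B.orderEmbOfFin_mem hB _) _ (B.orderEmbOfFin_mem hB _) _
    (B.orderEmbOfFin_mem hB _) hinit hlast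

end EndHomogeneous

section StepUp

variable {X : Type*}

/-- Erdős–Rado arrow notation `N → (n)_R`. -/
def IndiscernibleArrow {j : ℕ} (R : (Fin j → X) → Prop) (N n : ℕ) : Prop :=
  ∀ a : Fin N → X, ∃ t : Fin n → Fin N, StrictMono t ∧ IsIndiscernible R (a ∘ t)

theorem IndiscernibleArrow.of_fibers {r : ℕ} (hr : r ≠ 0) {F : (Fin (r + 1) → X) → Prop}
    {M N n : ℕ} (hfib : ∀ b : X, IndiscernibleArrow (fun y => F (Fin.snoc y b)) M n)
    (hN : (2 ^ (M + 1) ^ r + 1) ^ (M + 1) ≤ N) : IndiscernibleArrow F N n := by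
  intro a
  obtain ⟨s, hs, hhom⟩ := exists_strictMono_endHomogeneous F a hr hN
  obtain ⟨t, ht, hind⟩ := hfib (a (s (Fin.last M))) (a ∘ s ∘ Fin.castSucc)
  refine ⟨s ∘ Fin.castSucc ∘ t, hs.comp (Fin.strictMono_castSucc.comp ht), ?_⟩
  have key : ∀ u : Fin (r + 1) → Fin n, StrictMono u →
      (F (a ∘ (s ∘ Fin.castSucc ∘ t) ∘ u) ↔
        F (Fin.snoc ((a ∘ s ∘ Fin.castSucc ∘ t) ∘ Fin.init u) (a (s (Fin.last M))))) :=
    fun u hu => hhom (Fin.castSucc ∘ t ∘ u) (Fin.strictMono_castSucc.comp (ht.comp hu))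
  have hinit : ∀ {u : Fin (r + 1) → Fin n}, StrictMono u → StrictMono (Fin.init u) :=
    fun hu => hu.comp Fin.strictMono_castSucc
  rcases hind with hpos | hneg
  · exact Or.inl fun u hu => (key u hu).2 (hpos _ (hinit hu))
  · exact Or.inr fun u hu hF => hneg _ (hinit hu) ((key u hu).1 hF)

def paramFiber {K j p : ℕ} (E : (Fin K → X) → Prop) (h : j + p = K) (e : Fin p → X) :
    (Fin j → X) → Prop :=
  fun x => E fun i => Fin.append x e (Fin.cast h.symm i)

lemma paramFiber_snoc {K j p : ℕ} (E : (Fin K → X) → Prop) (h : j + 1 + p = K) (e : Fin p → X)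
    (b : X) : (fun y => paramFiber E h e (Fin.snoc y b)) =
      paramFiber E (by omega : j + (p + 1) = K) (Fin.cons b e) := by
  funext y
  simp only [paramFiber, Fin.append_left_snoc]
  rfl

lemma paramFiber_elim0 {K : ℕ} (E : (Fin K → X) → Prop) (h : K + 0 = K) :
    paramFiber E h Fin.elim0 = E := by
  funext x
  simp only [paramFiber, Fin.append_elim0]
  rfl

end StepUp

theorem exists_twr_bound_paramFiber {X : Type*} {K : ℕ} (E : (Fin K → X) → Prop) {c : ℝ} {n₀ : ℕ}
    (hbinary : ∀ n, n₀ ≤ n → ∀ p (h : 2 + p = K) (e : Fin p → X) (N : ℕ),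
      (n : ℝ) ^ c ≤ N → IndiscernibleArrow (paramFiber E h e) N n) (i : ℕ) :
    ∃ c' : ℝ, 1 ≤ c' ∧ ∃ n₁ : ℕ, ∀ n, n₁ ≤ n → ∀ p (h : i + 2 + p = K) (e : Fin p → X) (N : ℕ),
      Twr i ((n : ℝ) ^ c') ≤ N → IndiscernibleArrow (paramFiber E h e) N n := by
  induction i with
  | zero =>
    refine ⟨max c 1, le_max_right _ _, max n₀ 1, fun n hn p h e N hN => ?_⟩
    have hn1 : (1 : ℝ) ≤ n := by exact_mod_cast (le_max_right _ _).trans hn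
    refine hbinary n ((le_max_left _ _).trans hn) p (by omega) e N ?_
    exact (Real.rpow_le_rpow_of_exponent_le hn1 (le_max_left c 1)).trans hN
  | succ i ih =>
    obtain ⟨c', hc', n₁, H⟩ := ih
    refine ⟨c' * (2 * (i + 2) + 4 : ℕ), ?_, max n₁ 2, fun n hn p h e N hN => ?_⟩
    · exact one_le_mul_of_one_le_of_one_le hc' (by norm_cast; omega)
    have hn2 : (2 : ℝ) ≤ n := by exact_mod_cast (le_max_right _ _).trans hn
    have hx : (2 : ℝ) ≤ (n : ℝ) ^ c' :=
      hn2.trans (Real.self_le_rpow_of_one_le (by linarith) hc')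
    refine IndiscernibleArrow.of_fibers (r := i + 2) (M := ⌈Twr i ((n : ℝ) ^ c')⌉₊)
      (by omega) (fun b => ?_) ?_
    · rw [paramFiber_snoc]
      exact H n ((le_max_left _ _).trans hn) _ _ _ _ (Nat.le_ceil _)
    · have hpow : ((n : ℝ) ^ c') ^ (2 * (i + 2) + 4) = (n : ℝ) ^ (c' * (2 * (i + 2) + 4 : ℕ)) := by
        rw [← Real.rpow_natCast, ← Real.rpow_mul (by positivity)]
      exact_mod_cast (erdosRado_bound_le_twr_succ i (i + 2) hx).trans (hpow ▸ hN)

/-- Tower bound for a `k`-ary relation (arity `k = k₀ + 3`): polynomial trace bounds for all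
partial fiber relations (the NIP hypothesis) together with a polynomial Ramsey bound for the
binary fiber relations yield a Ramsey bound of `twr_{k−1}(n^{c'})` for `E`. -/
theorem nip_tower_bound {X : Type*} (k : ℕ) (E : (Fin (k + 3) → X) → Prop)
    (c : ℝ) (n₀ : ℕ)
    (hbinary : ∀ n : ℕ, n₀ ≤ n → ∀ e : Fin (k + 1) → X, ∀ N : ℕ,
      (n : ℝ) ^ c ≤ (N : ℝ) → ∀ a : Fin N → X,
        ∃ t : Fin n → Fin N, StrictMono t ∧
          IsIndiscernible (fun x : Fin 2 → X =>
            E fun i => Fin.append x e (Fin.cast (by omega : k + 3 = 2 + (k + 1)) i))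
            (a ∘ t)) :
    ∃ c' : ℝ, 0 < c' ∧ ∃ n₁ : ℕ, ∀ n : ℕ, n₁ ≤ n → ∀ N : ℕ,
      Twr (k + 1) ((n : ℝ) ^ c') ≤ (N : ℝ) → ∀ a : Fin N → X,
        ∃ t : Fin n → Fin N, StrictMono t ∧ IsIndiscernible E (a ∘ t) := by
  obtain ⟨c', hc', n₁, H⟩ := exists_twr_bound_paramFiber E
    (fun n hn p h e => by obtain rfl : p = k + 1 := (by omega); exact hbinary n hn e) (k + 1)
  refine ⟨c', by linarith, n₁, fun n hn N hN => ?_⟩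
  have hE := H n hn 0 rfl Fin.elim0 N hN
  rw [paramFiber_elim0] at hE
  exact hE
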